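/- arXiv:1705.04357 — 2 statements merged into one kernel-verified Lean document; each statement's English description precedes it below -/
import Mathlib

section
/- Let T be a real p×p matrix, t a real p×1 column vector, and α a real 1×p row vector, and for y ≥ 0 define J(y) = ∫_0^y e^{T(y−u)} (t α) e^{T u} du (a p×p matrix). Then the matrix exponential of the 2p×2p block matrix with blocks [[T, tα],[0, T]] scaled by y satisfies exp( [[T, tα],[0, T]] · y ) = [[e^{T y}, J(y)],[0, e^{T y}]]. -/
/-!
With `M = [[T, A], [0, S]]`, the candidate `F s = [[e^{sT}, e^{sT} K s], [0, e^{sS}]]`,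
where `K s = ∫_0^s e^{-uT} A e^{uS} du`, satisfies `F' = M F` and `F 0 = 1`, because
`e^{sT} K'(s) = A e^{sS}`. Any solution of `F' = M F` has `e^{-sM} F s` constant, so
`F s = e^{sM}`; and `e^{yT} K y` is the integral `J(y)` of the statement, since
`e^{(y-u)T} = e^{yT} e^{-uT}`.
-/

open NormedSpace

namespace NormedSpace

variable {𝔸 : Type*} [NormedRing 𝔸] [NormedAlgebra ℝ 𝔸] [CompleteSpace 𝔸]

theorem exp_smul_mul_exp_smul (x : 𝔸) (s u : ℝ) :
    exp (s • x) * exp (u • x) = exp ((s + u) • x) := by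
  let _ : NormedAlgebra ℚ 𝔸 := .restrictScalars ℚ ℝ 𝔸
  rw [add_smul, exp_add_of_commute (((Commute.refl x).smul_left s).smul_right u)]

theorem exp_smul_mul_exp_neg_smul (x : 𝔸) (s : ℝ) : exp (s • x) * exp (-s • x) = 1 := by
  rw [exp_smul_mul_exp_smul, add_neg_cancel, zero_smul, exp_zero]

theorem eq_exp_smul_mul_of_hasDerivAt {M : 𝔸} {F : ℝ → 𝔸}
    (hF : ∀ s, HasDerivAt F (M * F s) s) (s : ℝ) : F s = exp (s • M) * F 0 := by
  have hconst : ∀ r, HasDerivAt (fun r => exp (-r • M) * F r) 0 r := fun r => by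
    have hexp : HasDerivAt (fun r : ℝ => exp (-r • M)) (-M * exp (-r • M)) r := by
      simpa only [smul_neg, neg_smul] using hasDerivAt_exp_smul_const' (-M) r
    refine (hexp.mul (hF r)).congr_deriv ?_
    rw [← mul_assoc, ((Commute.refl M).smul_left (-r)).exp_left.eq, neg_mul, neg_mul,
      neg_add_cancel]
  have h := is_const_of_deriv_eq_zero (fun r => (hconst r).differentiableAt)
    (fun r => (hconst r).deriv) s 0
  simp only [neg_zero, zero_smul, exp_zero, one_mul] at h
  rw [← h, ← mul_assoc, exp_smul_mul_exp_neg_smul, one_mul]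

end NormedSpace

namespace Matrix

-- These instances agree with the product topology and entrywise `•` of matrices only up to
-- unfolding, so normed-algebra lemmas about `exp` enter through type-ascribed `have`s, not `rw`.
attribute [local instance] Matrix.linftyOpNormedAddCommGroup Matrix.linftyOpNormedSpace
  Matrix.linftyOpNormedRing Matrix.linftyOpNormedAlgebra

variable {l m n o : Type*} [Fintype l] [Fintype m] [Fintype n] [Fintype o]

theorem hasDerivAt_fromBlocks {𝕜 : Type*} [NontriviallyNormedField 𝕜] [CompleteSpace 𝕜]
    {A : 𝕜 → Matrix n l 𝕜} {B : 𝕜 → Matrix n m 𝕜}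
    {C : 𝕜 → Matrix o l 𝕜} {D : 𝕜 → Matrix o m 𝕜} {A' B' C' D'} {s : 𝕜}
    (hA : HasDerivAt A A' s) (hB : HasDerivAt B B' s) (hC : HasDerivAt C C' s)
    (hD : HasDerivAt D D' s) :
    HasDerivAt (fun s => fromBlocks (A s) (B s) (C s) (D s)) (fromBlocks A' B' C' D') s := by
  let L : (Matrix n l 𝕜 × Matrix n m 𝕜 × Matrix o l 𝕜 × Matrix o m 𝕜) →ₗ[𝕜]
      Matrix (n ⊕ o) (l ⊕ m) 𝕜 :=
    { toFun := fun X => fromBlocks X.1 X.2.1 X.2.2.1 X.2.2.2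
      map_add' := fun X Y => (fromBlocks_add ..).symm
      map_smul' := fun c X => (fromBlocks_smul ..).symm }
  exact L.toContinuousLinearMap.hasFDerivAt.comp_hasDerivAt s
    (hA.prodMk (hB.prodMk (hC.prodMk hD)))

theorem intervalIntegral_apply {f : ℝ → Matrix m n ℝ} (hf : Continuous f) (a b : ℝ)
    (i : m) (j : n) : (∫ u in a..b, f u) i j = ∫ u in a..b, f u i j :=
  ((entryLinearMap ℝ ℝ i j).toContinuousLinearMap.intervalIntegral_comp_comm
    (hf.intervalIntegrable a b)).symm

variable [DecidableEq n] (T A S : Matrix n n ℝ)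

theorem continuous_exp_neg_smul_mul_mul_exp_smul :
    Continuous fun u : ℝ => exp (-u • T) * A * exp (u • S) :=
  (((differentiable_exp_smul_const ℝ T).continuous.comp continuous_neg).mul
    continuous_const).mul (differentiable_exp_smul_const ℝ S).continuous

theorem hasDerivAt_exp_smul_mul_integral (s : ℝ) :
    HasDerivAt (fun s : ℝ => exp (s • T) * ∫ u in (0:ℝ)..s, exp (-u • T) * A * exp (u • S))
      (T * (exp (s • T) * ∫ u in (0:ℝ)..s, exp (-u • T) * A * exp (u • S))
        + A * exp (s • S)) s := by
  have hET : HasDerivAt (fun u : ℝ => exp (u • T)) (T * exp (s • T)) s :=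
    hasDerivAt_exp_smul_const' T s
  have hcancel : exp (s • T) * (exp (-s • T) * A * exp (s • S)) = A * exp (s • S) := by
    have h : exp (s • T) * exp (-s • T) = 1 := exp_smul_mul_exp_neg_smul T s
    rw [← mul_assoc, ← mul_assoc, h, one_mul]
  refine (hET.mul ((continuous_exp_neg_smul_mul_mul_exp_smul T A S).integral_hasStrictDerivAt
    0 s).hasDerivAt).congr_deriv ?_
  rw [hcancel, mul_assoc]

theorem of_intervalIntegral_exp_smul_mul_mul_exp_smul_apply (y : ℝ) :
    (of fun k l => ∫ u in (0:ℝ)..y, (exp ((y - u) • T) * A * exp (u • S)) k l)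
      = exp (y • T) * ∫ u in (0:ℝ)..y, exp (-u • T) * A * exp (u • S) := by
  have hf := continuous_exp_neg_smul_mul_mul_exp_smul T A S
  have hsplit : ∀ u : ℝ,
      exp ((y - u) • T) * A * exp (u • S) = exp (y • T) * (exp (-u • T) * A * exp (u • S)) :=
    fun u => by
      have h : exp (y • T) * exp (-u • T) = exp ((y - u) • T) := exp_smul_mul_exp_smul T y (-u)
      rw [← h, mul_assoc, mul_assoc, mul_assoc]
  ext k l
  calc ∫ u in (0:ℝ)..y, (exp ((y - u) • T) * A * exp (u • S)) k l
      = ∫ u in (0:ℝ)..y, (exp (y • T) * (exp (-u • T) * A * exp (u • S))) k l :=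
        intervalIntegral.integral_congr fun u _ => congrArg (· k l) (hsplit u)
    _ = (∫ u in (0:ℝ)..y, exp (y • T) * (exp (-u • T) * A * exp (u • S))) k l :=
        (intervalIntegral_apply (continuous_const.mul hf) 0 y k l).symm
    _ = (exp (y • T) * ∫ u in (0:ℝ)..y, exp (-u • T) * A * exp (u • S)) k l :=
        congrArg (· k l) ((ContinuousLinearMap.mul ℝ _ (exp (y • T))).intervalIntegral_comp_comm
          (hf.intervalIntegrable 0 y))

theorem exp_smul_fromBlocks_zero₂₁ (y : ℝ) :
    exp (y • fromBlocks T A 0 S) = fromBlocks (exp (y • T))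
      (of fun k l => ∫ u in (0:ℝ)..y, (exp ((y - u) • T) * A * exp (u • S)) k l) 0
      (exp (y • S)) := by
  let F : ℝ → Matrix (n ⊕ n) (n ⊕ n) ℝ := fun s => fromBlocks (exp (s • T))
    (exp (s • T) * ∫ u in (0:ℝ)..s, exp (-u • T) * A * exp (u • S)) 0 (exp (s • S))
  have hF : ∀ s, HasDerivAt F (fromBlocks T A 0 S * F s) s := fun s => by
    have hET : HasDerivAt (fun u : ℝ => exp (u • T)) (T * exp (s • T)) s :=
      hasDerivAt_exp_smul_const' T s
    have hES : HasDerivAt (fun u : ℝ => exp (u • S)) (S * exp (s • S)) s :=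
      hasDerivAt_exp_smul_const' S s
    refine (hasDerivAt_fromBlocks hET (hasDerivAt_exp_smul_mul_integral T A S s)
      (hasDerivAt_const s 0) hES).congr_deriv ?_
    simp [F, fromBlocks_multiply]
  have hF0 : F 0 = 1 := by simp [F]
  calc exp (y • fromBlocks T A 0 S) = exp (y • fromBlocks T A 0 S) * F 0 := by rw [hF0, mul_one]
    _ = F y := (eq_exp_smul_mul_of_hasDerivAt hF y).symm
    _ = _ := by rw [of_intervalIntegral_exp_smul_mul_mul_exp_smul_apply]

end Matrix

theorem van_loan_block_exponential_general
    (p : ℕ) (T : Matrix (Fin p) (Fin p) ℝ) (t α : Fin p → ℝ) (y : ℝ) :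
    NormedSpace.exp (y • Matrix.fromBlocks T (Matrix.vecMulVec t α) 0 T)
      = Matrix.fromBlocks
          (NormedSpace.exp (y • T))
          (Matrix.of fun k l => ∫ u in (0:ℝ)..y,
            (NormedSpace.exp ((y - u) • T) * Matrix.vecMulVec t α
              * NormedSpace.exp (u • T)) k l)
          0
          (NormedSpace.exp (y • T)) :=
  Matrix.exp_smul_fromBlocks_zero₂₁ T (Matrix.vecMulVec t α) T y

/-- **Van Loan's identity.** For a real `p×p` matrix `T`, a column vector `t`, a row
vector `α`, and `y ≥ 0`, with `J(y) = ∫_0^y e^{T(y-u)} (t α) e^{T u} du`, the matrix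
exponential of the block matrix `[[T, tα],[0,T]]` scaled by `y` is
`[[e^{Ty}, J(y)],[0, e^{Ty}]]`. -/
theorem van_loan_block_exponential
    (p : ℕ) (T : Matrix (Fin p) (Fin p) ℝ) (t α : Fin p → ℝ) (y : ℝ) (hy : 0 ≤ y) :
    NormedSpace.exp (y • Matrix.fromBlocks T (Matrix.vecMulVec t α) 0 T)
      = Matrix.fromBlocks
          (NormedSpace.exp (y • T))
          (Matrix.of fun k l => ∫ u in (0:ℝ)..y,
            (NormedSpace.exp ((y - u) • T) * Matrix.vecMulVec t α
              * NormedSpace.exp (u • T)) k l)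
          0
          (NormedSpace.exp (y • T)) :=
  van_loan_block_exponential_general p T t α y
end

section
/- Let λ > 0 and let τ be exponentially distributed with rate λ. Let N be independent of τ, taking values in a countable set {s_i : i ∈ ℕ} of positive reals with P(N = s_i) = π_i, and suppose the support of N is unbounded (for every M > 0 there exists i with s_i > M and π_i > 0). Then Y = Nτ is heavy tailed in the sense that E[e^{sY}] = ∞ for every s > 0. -/
/-!
Pick an atom `a = s i` of `N` with `r a > λ`, which the unbounded support provides. On the event
`{τ > t, N = a}`, of probability `e^{-λ t} π_i` by independence, the integrand is at least
`e^{r a t}`; hence `E[e^{r Y}] ≥ e^{(r a - λ) t} π_i` for every `t ≥ 0`, and the right-hand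
side tends to infinity.
-/

open MeasureTheory ProbabilityTheory Filter Topology

theorem ProbabilityTheory.IndepFun.ofReal_exp_mul_measure_le_lintegral_exp_mul
    {Ω : Type*} [MeasurableSpace Ω] {μ : Measure Ω} {τ N : Ω → ℝ} (hτ : Measurable τ)
    (hN : Measurable N) (hindep : IndepFun τ N μ) {r a : ℝ} (hra : 0 ≤ r * a) (t : ℝ) :
    ENNReal.ofReal (Real.exp (r * a * t)) * (μ {ω | t < τ ω} * μ {ω | N ω = a}) ≤
      ∫⁻ ω, ENNReal.ofReal (Real.exp (r * (N ω * τ ω))) ∂μ := by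
  have hjoint : μ {ω | t < τ ω} * μ {ω | N ω = a} = μ (τ ⁻¹' Set.Ioi t ∩ N ⁻¹' {a}) :=
    (hindep.measure_inter_preimage_eq_mul _ _ measurableSet_Ioi (measurableSet_singleton a)).symm
  rw [hjoint]
  set f : Ω → ENNReal := fun ω ↦ ENNReal.ofReal (Real.exp (r * (N ω * τ ω)))
  calc _ ≤ ENNReal.ofReal (Real.exp (r * a * t)) *
        μ {ω | ENNReal.ofReal (Real.exp (r * a * t)) ≤ f ω} := by
        gcongr
        rintro ω ⟨htτ, hNa⟩
        simp only [Set.mem_preimage, Set.mem_Ioi, Set.mem_singleton_iff] at htτ hNa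
        simp only [f, Set.mem_ofPred_eq, hNa, ← mul_assoc]
        gcongr
    _ ≤ ∫⁻ ω, f ω ∂μ := mul_meas_ge_le_lintegral₀ (by fun_prop : Measurable f).aemeasurable _

theorem tendsto_ofReal_exp_mul_mul_ofReal_exp_neg_mul {c lam p : ℝ} (hc : lam < c)
    (hp : 0 < p) :
    Tendsto (fun t ↦ ENNReal.ofReal (Real.exp (c * t)) *
      (ENNReal.ofReal (Real.exp (-lam * t)) * ENNReal.ofReal p)) atTop (𝓝 ⊤) := by
  have hgrowth : Tendsto (fun t ↦ Real.exp ((c - lam) * t) * p) atTop atTop :=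
    (Real.tendsto_exp_atTop.comp (tendsto_id.const_mul_atTop (sub_pos.2 hc))).atTop_mul_const hp
  refine (ENNReal.tendsto_ofReal_atTop.comp hgrowth).congr fun t ↦ ?_
  rw [Function.comp_apply, ← ENNReal.ofReal_mul (Real.exp_nonneg _),
    ← ENNReal.ofReal_mul (Real.exp_nonneg _), ← mul_assoc, ← Real.exp_add]
  ring_nf

theorem exponential_scale_mixture_heavy_tailed_general
    {Ω : Type*} [MeasurableSpace Ω] (μ : Measure Ω)
    (lam : ℝ) (hlam : 0 < lam)
    (τ N : Ω → ℝ) (hτm : Measurable τ) (hNm : Measurable N)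
    (hτlaw : ∀ x : ℝ, 0 ≤ x → μ {ω | x < τ ω} = ENNReal.ofReal (Real.exp (-lam * x)))
    (s : ℕ → ℝ)
    (π : ℕ → ℝ)
    (hπ : ∀ i, μ {ω | N ω = s i} = ENNReal.ofReal (π i))
    (hindep : IndepFun τ N μ)
    (hub : ∀ M : ℝ, 0 < M → ∃ i, M < s i ∧ 0 < π i) :
    ∀ r : ℝ, 0 < r →
      ∫⁻ ω, ENNReal.ofReal (Real.exp (r * (N ω * τ ω))) ∂μ = ⊤ := by
  intro r hr
  obtain ⟨i, hsi, hπi⟩ := hub (lam / r) (by positivity)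
  have hlam_lt : lam < r * s i := (div_lt_iff₀' hr).1 hsi
  refine top_unique (le_of_tendsto (tendsto_ofReal_exp_mul_mul_ofReal_exp_neg_mul hlam_lt hπi) ?_)
  filter_upwards [eventually_ge_atTop 0] with t ht
  rw [← hτlaw t ht, ← hπ i]
  exact hindep.ofReal_exp_mul_measure_le_lintegral_exp_mul hτm hNm (hlam.trans hlam_lt).le t

/-- **Heavy-tailedness of exponential scale mixtures with unbounded scaling support.**
Let `τ ~ Exp(λ)` (i.e. `P(τ > x) = e^{-λ x}` for `x ≥ 0`) and `N` be independent of
`τ`, taking values in a countable set `{s i}` of positive reals with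
`P(N = s i) = π i`, where the support of `N` is unbounded: for every `M > 0` there
is `i` with `s i > M` and `π i > 0`. Then `Y = N·τ` is heavy tailed:
`E[e^{r Y}] = ∞` for every `r > 0`. -/
theorem exponential_scale_mixture_heavy_tailed
    {Ω : Type*} [MeasurableSpace Ω] (μ : Measure Ω) [IsProbabilityMeasure μ]
    (lam : ℝ) (hlam : 0 < lam)
    (τ N : Ω → ℝ) (hτm : Measurable τ) (hNm : Measurable N)
    (hτ0 : ∀ ω, 0 ≤ τ ω)
    (hτlaw : ∀ x : ℝ, 0 ≤ x → μ {ω | x < τ ω} = ENNReal.ofReal (Real.exp (-lam * x)))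
    (s : ℕ → ℝ) (hs : ∀ i, 0 < s i) (hsinj : Function.Injective s)
    (π : ℕ → ℝ) (hπ0 : ∀ i, 0 ≤ π i)
    (hπ : ∀ i, μ {ω | N ω = s i} = ENNReal.ofReal (π i))
    (hNval : ∀ ω, ∃ i, N ω = s i)
    (hindep : IndepFun τ N μ)
    (hub : ∀ M : ℝ, 0 < M → ∃ i, M < s i ∧ 0 < π i) :
    ∀ r : ℝ, 0 < r →
      ∫⁻ ω, ENNReal.ofReal (Real.exp (r * (N ω * τ ω))) ∂μ = ⊤ :=
  exponential_scale_mixture_heavy_tailed_general μ lam hlam τ N hτm hNm hτlaw s π hπ hindep hub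
end
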